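/- Let (W, ⟨·,·⟩) be a real vector space with a symmetric bilinear form, X_n, X_t ∈ W, and θ a symmetric 2×2 matrix with det θ = ς ∈ {±1} and θ^{nn} ≠ 0. Set g_{αβ} := ⟨X_α, X_β⟩, J := θ^{nn}X_n + θ^{nt}X_t, and f_{αβ} := θ_{αβ}·½θ^{λτ}g_{λτ} − g_{αβ}. Then f_{αβ} = 0 for all α, β if and only if both ⟨J, X_t⟩ = 0 and ⟨X_t, X_t⟩ − ς⟨J, J⟩ = 0. -/

import Mathlib

open Matrix

/-- the stress-energy constraints f_{αβ} = 0 (on pre-boundary fields)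
are equivalent to the two constraints ⟨J,X_t⟩ = 0 and ⟨X_t,X_t⟩ − ς⟨J,J⟩ = 0 in the
reduced variables, where J := θ^{nn}X_n + θ^{nt}X_t. -/
theorem stress_energy_iff_constraints {W : Type*} [AddCommGroup W] [Module ℝ W]
    (B : W →ₗ[ℝ] W →ₗ[ℝ] ℝ) (hB : ∀ v w, B v w = B w v)
    (θ : Matrix (Fin 2) (Fin 2) ℝ) (hsymm : θ.IsSymm) (ς : ℝ) (hς : ς = 1 ∨ ς = -1)
    (hdet : θ.det = ς) (hnn : θ⁻¹ 0 0 ≠ 0) (X : Fin 2 → W) :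
    (∀ α β : Fin 2,
      θ α β * ((1 / 2 : ℝ) * ∑ lam, ∑ tau, θ⁻¹ lam tau * B (X lam) (X tau))
        - B (X α) (X β) = 0)
    ↔ (B (θ⁻¹ 0 0 • X 0 + θ⁻¹ 0 1 • X 1) (X 1) = 0 ∧
       B (X 1) (X 1)
         - ς * B (θ⁻¹ 0 0 • X 0 + θ⁻¹ 0 1 • X 1) (θ⁻¹ 0 0 • X 0 + θ⁻¹ 0 1 • X 1) = 0)
    := by
  have hθ10 : θ 1 0 = θ 0 1 := hsymm.apply 0 1
  have hςinv : (ς:ℝ)⁻¹ = ς := by rcases hς with h|h <;> norm_num [h]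
  have hς2 : ς * ς = 1 := by rcases hς with h|h <;> norm_num [h]
  have hdet2 : θ 0 0 * θ 1 1 - θ 0 1 * θ 0 1 = ς := by
    rw [← hdet, Matrix.det_fin_two, hθ10]
  have hinv : θ⁻¹ = ς • !![θ 1 1, -(θ 0 1); -(θ 0 1), θ 0 0] := by
    rw [Matrix.inv_def, Matrix.adjugate_fin_two, hdet, Ring.inverse_eq_inv', hςinv, hθ10]
  have h00 : θ⁻¹ 0 0 = ς * θ 1 1 := by rw [hinv]; simp
  have h01 : θ⁻¹ 0 1 = -(ς * θ 0 1) := by rw [hinv]; simp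
  have h10 : θ⁻¹ 1 0 = -(ς * θ 0 1) := by rw [hinv]; simp
  have h11 : θ⁻¹ 1 1 = ς * θ 0 0 := by rw [hinv]; simp
  have hc : θ 1 1 ≠ 0 := by intro h; apply hnn; rw [h00, h]; ring
  have hB10 : B (X 1) (X 0) = B (X 0) (X 1) := hB _ _
  simp only [Fin.sum_univ_two, h00, h01, h10, h11, map_add, _root_.map_smul, LinearMap.add_apply,
    LinearMap.smul_apply, smul_eq_mul, hB10]
  constructor
  · intro h
    have e00 := h 0 0; have e01 := h 0 1; have e11 := h 1 1
    constructor
    · linear_combination ς * θ 0 1 * e11 - ς * θ 1 1 * e01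
    · linear_combination ς^3 * θ 1 1^2 * e00 - 2*ς^3*θ 0 1*θ 1 1*e01
        - (1 - ς^3*θ 0 1^2)*e11
        - θ 1 1 * ((1:ℝ)/2*(ς*θ 1 1*(B (X 0)) (X 0) - 2*ς*θ 0 1*(B (X 0)) (X 1) + ς*θ 0 0*(B (X 1)) (X 1))) * (ς^2+1) * hς2
        - ς^3 * θ 1 1 * ((1:ℝ)/2*(ς*θ 1 1*(B (X 0)) (X 0) - 2*ς*θ 0 1*(B (X 0)) (X 1) + ς*θ 0 0*(B (X 1)) (X 1))) * hdet2
  · rintro ⟨h1, h2⟩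
    have hv : θ 1 1 * (B (X 0)) (X 1) = θ 0 1 * (B (X 1)) (X 1) := by
      linear_combination ς*h1 - (θ 1 1 * (B (X 0)) (X 1) - θ 0 1 * (B (X 1)) (X 1))*hς2
    have hcc : θ 1 1 * (θ 1 1 * (B (X 0)) (X 0)) = θ 1 1 * (θ 0 0 * (B (X 1)) (X 1)) := by
      linear_combination (-(ς^3))*h2 + 2*θ 0 1*hv - (B (X 1)) (X 1)*hdet2
        + ((ς^4+ς^2+1)*(-(θ 1 1^2*(B (X 0)) (X 0)) + 2*θ 0 1*θ 1 1*(B (X 0)) (X 1) - θ 0 1^2*(B (X 1)) (X 1)) + ς*(B (X 1)) (X 1))*hς2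
    have hu := mul_left_cancel₀ hc hcc
    have hU : (B (X 0)) (X 0) = θ 0 0 * (B (X 1)) (X 1) / θ 1 1 := by
      field_simp; linear_combination hu
    have hV : (B (X 0)) (X 1) = θ 0 1 * (B (X 1)) (X 1) / θ 1 1 := by
      field_simp; linear_combination hv
    intro α β
    fin_cases α <;> fin_cases β <;>
      simp only [Fin.mk_zero, Fin.mk_one, hθ10, hB10] <;>
      rw [hU, hV] <;> field_simp <;> ring_nf
    · linear_combination 2*θ 0 0*ς*(B (X 1)) (X 1)*hdet2 + 2*θ 0 0*(B (X 1)) (X 1)*hς2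
    · linear_combination 2*θ 0 1*ς*(B (X 1)) (X 1)*hdet2 + 2*θ 0 1*(B (X 1)) (X 1)*hς2
    · linear_combination 2*θ 0 1*ς*(B (X 1)) (X 1)*hdet2 + 2*θ 0 1*(B (X 1)) (X 1)*hς2
    · linear_combination 2*ς*(B (X 1)) (X 1)*hdet2 + 2*(B (X 1)) (X 1)*hς2
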